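/- arXiv:1803.04940 — 2 statements merged into one kernel-verified Lean document; each statement's English description precedes it below -/
import Mathlib

section
/- Let r ≥ 3 and let integers satisfy: k - 1 = ((n+2)/(r-2))·(r-1), there are t set-node positions α_1 < α_2 < ... < α_t in [k] with α_{j+1} - α_j = r - 1 for all j, and the number of element-node positions satisfies (t-1)(r-2) + (α_1 - 1) + (k - α_t) ≤ n + 2. Then α_1 = 1 and α_t = k. -/
/-- Arithmetic core of Lemma `setElementNodesPath`: with `r ≥ 3`, `n + 2 = (r-2)·q`,
`k - 1 = q·(r-1)`, set-node positions `α 1 < … < α t` in `[1,k]` with consecutive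
differences `r - 1`, and `(t-1)(r-2) + (α 1 - 1) + (k - α t) ≤ n + 2`, the first and
last positions of the path are set-node positions: `α 1 = 1` and `α t = k`. -/
theorem stmt_9 (r n k t q : ℕ) (α : ℕ → ℕ) (hr : 3 ≤ r)
    (hq : n + 2 = (r - 2) * q) (hk : k - 1 = q * (r - 1))
    (ht : 1 ≤ t) (hα1 : 1 ≤ α 1) (hαt : α t ≤ k)
    (hstep : ∀ j, 1 ≤ j → j < t → α (j + 1) = α j + (r - 1))
    (hcount : (t - 1) * (r - 2) + (α 1 - 1) + (k - α t) ≤ n + 2) :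
    α 1 = 1 ∧ α t = k := by
  have key : ∀ j, 1 ≤ j → j ≤ t → α j = α 1 + (j - 1) * (r - 1) := by
    intro j hj1 hjt
    induction j with
    | zero => omega
    | succ j ih =>
      rcases Nat.eq_zero_or_pos j with hj0 | hjpos
      · subst hj0; simp
      · have h1 : α (j + 1) = α j + (r - 1) := hstep j hjpos (by omega)
        have h2 : α j = α 1 + (j - 1) * (r - 1) := ih hjpos (by omega)
        have h3 : j - 1 + 1 = j := by omega
        rw [h1, h2]
        have h4 : j * (r - 1) = (j - 1) * (r - 1) + (r - 1) := by
          conv_lhs => rw [← h3]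
          ring
        simp [h4, Nat.add_assoc]
  have hαtv : α t = α 1 + (t - 1) * (r - 1) := key t ht le_rfl
  set S := t - 1 with hS
  set A := α 1 - 1 with hA
  set B := k - α t with hB
  -- main equation
  have hE : A + B + S * (r - 1) = q * (r - 1) := by
    have : k = α t + B := by omega
    have : k - 1 = A + B + S * (r - 1) := by omega
    omega
  have hSq : S ≤ q := by
    by_contra h
    push_neg at h
    have h2 : q * (r - 1) < S * (r - 1) :=
      (Nat.mul_lt_mul_right (by omega : 0 < r - 1)).mpr h
    omega
  obtain ⟨d, hd⟩ := Nat.le.dest hSq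
  have hAB : A + B = d * (r - 1) := by
    have : q * (r - 1) = S * (r - 1) + d * (r - 1) := by rw [← hd]; ring
    omega
  have hcount' : S * (r - 2) + A + B ≤ (r - 2) * (S + d) := by
    rw [hd]; omega
  have h2 : A + B ≤ d * (r - 2) := by
    have : (r - 2) * (S + d) = S * (r - 2) + d * (r - 2) := by ring
    omega
  have hd0 : d = 0 := by
    by_contra hd0
    have h3 : d * (r - 2) < d * (r - 1) :=
      Nat.mul_lt_mul_of_le_of_lt (le_refl d) (by omega) (by omega)
    omega
  subst hd0
  simp at hAB
  omega
end

section
/- Let X be a finite set, S a family of subsets of X, and d a positive integer. Define S' to be the family of all unions of d pairwise-disjoint sets from S. Then X has an exact cover from S' if and only if X has an exact cover from S whose size is a multiple of d. -/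
/-! Flattening a disjoint cover by groups of `d` disjoint sets gives a disjoint cover by
`d` times as many sets of the original family; conversely a disjoint cover of size `d * k`
is cut into `k` blocks of `d` sets each. Both rest on the fact that `s + t` is pairwise
disjoint exactly when `s` and `t` are and their unions are disjoint. -/

namespace Multiset

variable {β : Type*}

theorem pairwise_add_iff {r : β → β → Prop} [Std.Symm r] {s t : Multiset β} :
    (s + t).Pairwise r ↔ s.Pairwise r ∧ t.Pairwise r ∧ ∀ a ∈ s, ∀ b ∈ t, r a b := by
  induction s using Quotient.inductionOn
  induction t using Quotient.inductionOn
  simp [pairwise_coe_iff_pairwise, List.pairwise_append]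

theorem pairwise_cons_iff {r : β → β → Prop} [Std.Symm r] {a : β} {s : Multiset β} :
    (a ::ₘ s).Pairwise r ↔ s.Pairwise r ∧ ∀ b ∈ s, r a b := by
  induction s using Quotient.inductionOn
  simp [pairwise_coe_iff_pairwise, and_comm]

theorem exists_le_card_eq {s : Multiset β} {n : ℕ} (h : n ≤ card s) :
    ∃ t ≤ s, card t = n := by
  have : powersetCard n s ≠ 0 := by
    rw [← card_pos, card_powersetCard]
    exact Nat.choose_pos h
  obtain ⟨t, ht⟩ := exists_mem_of_ne_zero this
  exact ⟨t, mem_powersetCard.1 ht⟩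

variable [DistribLattice β] [OrderBot β]

theorem disjoint_sup_left_iff {s : Multiset β} {a : β} :
    Disjoint s.sup a ↔ ∀ b ∈ s, Disjoint b a := by
  induction s using Multiset.induction_on with
  | empty => simp
  | cons b s ih => simp [ih]

theorem disjoint_sup_right_iff {s : Multiset β} {a : β} :
    Disjoint a s.sup ↔ ∀ b ∈ s, Disjoint a b := by
  simp only [disjoint_comm (a := a), disjoint_sup_left_iff]

theorem pairwise_disjoint_cons_iff {a : β} {s : Multiset β} :
    (a ::ₘ s).Pairwise Disjoint ↔ s.Pairwise Disjoint ∧ Disjoint a s.sup := by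
  rw [pairwise_cons_iff, disjoint_sup_right_iff]

theorem pairwise_disjoint_add_iff {s t : Multiset β} :
    (s + t).Pairwise Disjoint ↔
      s.Pairwise Disjoint ∧ t.Pairwise Disjoint ∧ Disjoint s.sup t.sup := by
  rw [pairwise_add_iff, disjoint_sup_left_iff]
  simp only [disjoint_sup_right_iff]

end Multiset

section Grouping

open Multiset

variable {β : Type*} [DistribLattice β] [OrderBot β]

/-- The family `S'` of the paper: all joins of `d` pairwise disjoint members of `S`. -/
def groupedFamily (S : Set β) (d : ℕ) : Set β :=
  {B | ∃ D : Multiset β, (∀ A ∈ D, A ∈ S) ∧ card D = d ∧ D.Pairwise Disjoint ∧ D.sup = B}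

theorem exists_flatten_of_forall_mem_groupedFamily {S : Set β} {d : ℕ} {C : Multiset β}
    (hC : ∀ B ∈ C, B ∈ groupedFamily S d) (hpw : C.Pairwise Disjoint) :
    ∃ E : Multiset β, (∀ A ∈ E, A ∈ S) ∧ E.Pairwise Disjoint ∧ E.sup = C.sup ∧
      card E = d * card C := by
  induction C using Multiset.induction_on with
  | empty => exact ⟨0, by simp, pairwise_zero _, rfl, rfl⟩
  | cons B C ih =>
    rw [pairwise_disjoint_cons_iff] at hpw
    obtain ⟨D, hDS, hDcard, hDpw, rfl⟩ := hC B (mem_cons_self B C)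
    obtain ⟨E, hES, hEpw, hEsup, hEcard⟩ := ih (fun B' hB' ↦ hC B' (mem_cons_of_mem hB')) hpw.1
    refine ⟨D + E, ?_, ?_, ?_, ?_⟩
    · simpa only [mem_add, or_imp, forall_and] using ⟨hDS, hES⟩
    · exact pairwise_disjoint_add_iff.2 ⟨hDpw, hEpw, hEsup ▸ hpw.2⟩
    · rw [Multiset.sup_add, hEsup, sup_cons]
    · rw [card_add, card_cons, hDcard, hEcard, mul_add_one, add_comm]

theorem exists_grouping_of_card_eq_mul {S : Set β} {d : ℕ} {C : Multiset β}
    (hS : ∀ A ∈ C, A ∈ S) (hpw : C.Pairwise Disjoint) {k : ℕ} (hk : card C = d * k) :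
    ∃ C' : Multiset β, (∀ B ∈ C', B ∈ groupedFamily S d) ∧ C'.Pairwise Disjoint ∧
      C'.sup = C.sup := by
  induction k generalizing C with
  | zero => exact ⟨0, by simp, pairwise_zero _, by simp_all⟩
  | succ k ih =>
    obtain ⟨D, hDC, hDcard⟩ :=
      exists_le_card_eq (hk ▸ Nat.le_mul_of_pos_right d k.succ_pos : d ≤ card C)
    obtain ⟨E, rfl⟩ := exists_add_of_le hDC
    rw [card_add, hDcard, mul_add_one, add_comm] at hk
    have hDS : ∀ A ∈ D, A ∈ S := fun A hA ↦ hS A (mem_add.2 (.inl hA))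
    have hES : ∀ A ∈ E, A ∈ S := fun A hA ↦ hS A (mem_add.2 (.inr hA))
    obtain ⟨hDpw, hEpw, hDE⟩ := pairwise_disjoint_add_iff.1 hpw
    obtain ⟨C', hC'S, hC'pw, hC'sup⟩ := ih hES hEpw (Nat.add_right_cancel hk)
    refine ⟨D.sup ::ₘ C', ?_, ?_, ?_⟩
    · simpa only [mem_cons, forall_eq_or_imp] using ⟨⟨D, hDS, hDcard, hDpw, rfl⟩, hC'S⟩
    · exact pairwise_disjoint_cons_iff.2 ⟨hC'pw, hC'sup ▸ hDE⟩
    · rw [sup_cons, hC'sup, Multiset.sup_add]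

end Grouping

theorem stmt_13_general {α : Type*} [DecidableEq α] (X : Finset α) (S : Set (Finset α))
    (d : ℕ) :
    (∃ C : Multiset (Finset α),
        (∀ B ∈ C, ∃ D : Multiset (Finset α), (∀ A ∈ D, A ∈ S) ∧
          Multiset.card D = d ∧ D.Pairwise Disjoint ∧ D.sup = B) ∧
        C.Pairwise Disjoint ∧ C.sup = X) ↔
    (∃ C : Multiset (Finset α), (∀ A ∈ C, A ∈ S) ∧ C.Pairwise Disjoint ∧
        C.sup = X ∧ d ∣ Multiset.card C) := by
  constructor
  · rintro ⟨C, hC, hpw, rfl⟩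
    obtain ⟨E, hES, hEpw, hEsup, hEcard⟩ := exists_flatten_of_forall_mem_groupedFamily hC hpw
    exact ⟨E, hES, hEpw, hEsup, hEcard ▸ dvd_mul_right d _⟩
  · rintro ⟨C, hS, hpw, rfl, k, hk⟩
    exact exists_grouping_of_card_eq_mul hS hpw hk

/-- Grouping step: let `S'` consist of all unions of `d` pairwise-disjoint sets of `S`
(sets chosen with multiplicity). Then `X` has an exact cover from `S'` iff `X` has an
exact cover from `S` whose size is a multiple of `d`. Covers are multisets of sets of
the family that are pairwise disjoint and whose union is `X`. -/
theorem stmt_13 {α : Type*} [DecidableEq α] (X : Finset α) (S : Set (Finset α))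
    (d : ℕ) (hd : 0 < d) :
    (∃ C : Multiset (Finset α),
        (∀ B ∈ C, ∃ D : Multiset (Finset α), (∀ A ∈ D, A ∈ S) ∧
          Multiset.card D = d ∧ D.Pairwise Disjoint ∧ D.sup = B) ∧
        C.Pairwise Disjoint ∧ C.sup = X) ↔
    (∃ C : Multiset (Finset α), (∀ A ∈ C, A ∈ S) ∧ C.Pairwise Disjoint ∧
        C.sup = X ∧ d ∣ Multiset.card C) :=
  stmt_13_general X S d
end
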